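/- arXiv:2306.13991 — 4 statements merged into one kernel-verified Lean document; each statement's English description precedes it below -/
import Mathlib

section
/- (Representer theorem) Let F be a real inner product space (Hilbert space), φ : ℝ^d → F a map, and x_1,...,x_m ∈ ℝ^d training points with labels y_1,...,y_m ∈ {-1,1}. Define R(w,b) = (1/2)‖w‖² + C·Σ_i ℓ_{0/1}(1 - y_i(⟨w, φ(x_i)⟩ + b)). If (w*, b*) is a global minimizer of R over F × ℝ, then w* lies in the linear span of {φ(x_1), ..., φ(x_m)}. -/
/-! Write `P` for the orthogonal projection onto the finite-dimensional span `K` of the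
feature vectors `φ (x i)`. Since `w - P w ⊥ K`, the scores `⟪w, φ (x i)⟫` do not change when
`w` is replaced by `P w`, so neither does the empirical loss, while `‖P w‖ ≤ ‖w‖` with equality
only on `K` (Pythagoras). A minimizer therefore already satisfies `‖w‖ ≤ ‖P w‖`, i.e. lies in `K`. -/

namespace Submodule

variable {𝕜 E : Type*} [RCLike 𝕜] [NormedAddCommGroup E] [InnerProductSpace 𝕜 E]
  (K : Submodule 𝕜 E) [K.HasOrthogonalProjection]

theorem inner_starProjection_left_of_mem {v : E} (hv : v ∈ K) (w : E) :
    inner 𝕜 (K.starProjection w) v = inner 𝕜 w v := by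
  rw [inner_starProjection_left_eq_right, starProjection_eq_self_iff.mpr hv]

theorem mem_of_norm_le_norm_starProjection {w : E} (h : ‖w‖ ≤ ‖K.starProjection w‖) : w ∈ K :=
  (K.mem_iff_norm_starProjection w).mpr <| le_antisymm (K.norm_starProjection_apply_le w) h

theorem mem_of_forall_le_of_loss_starProjection {g : ℝ → ℝ} (hg : StrictMonoOn g (Set.Ici 0))
    {L : E → ℝ} (hL : ∀ w, L (K.starProjection w) = L w) {wstar : E}
    (hmin : ∀ w, g ‖wstar‖ + L wstar ≤ g ‖w‖ + L w) : wstar ∈ K := by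
  have hle : g ‖wstar‖ ≤ g ‖K.starProjection wstar‖ := by
    simpa [hL] using hmin (K.starProjection wstar)
  exact K.mem_of_norm_le_norm_starProjection <|
    (hg.le_iff_le (norm_nonneg _) (norm_nonneg _)).mp hle

end Submodule

theorem representer_theorem_general
    {F : Type*} [NormedAddCommGroup F] [InnerProductSpace ℝ F]
    (d m : ℕ) (φ : (Fin d → ℝ) → F) (x : Fin m → (Fin d → ℝ))
    (y : Fin m → ℝ) (C : ℝ)
    (R : F → ℝ → ℝ)
    (hR : ∀ w b, R w b = (1 / 2) * ‖w‖ ^ 2 +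
      C * ∑ i : Fin m,
        (if 0 < 1 - y i * (inner ℝ w (φ (x i)) + b) then (1 : ℝ) else 0))
    (wstar : F) (bstar : ℝ)
    (hmin : ∀ w b, R wstar bstar ≤ R w b) :
    wstar ∈ Submodule.span ℝ (Set.range fun i => φ (x i)) := by
  set K := Submodule.span ℝ (Set.range fun i => φ (x i))
  have : FiniteDimensional ℝ K := FiniteDimensional.span_of_finite ℝ (Set.finite_range _)
  have hg : StrictMonoOn (fun t : ℝ => 1 / 2 * t ^ 2) (Set.Ici 0) := fun s hs t ht hst => by
    simpa using pow_left_strictMonoOn₀ two_ne_zero hs ht hst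
  refine K.mem_of_forall_le_of_loss_starProjection hg (L := fun w => R w bstar - 1 / 2 * ‖w‖ ^ 2)
    (fun w => ?_) (fun w => by simpa using hmin w bstar)
  simp only [hR, K.inner_starProjection_left_of_mem (Submodule.subset_span (Set.mem_range_self _))]
  ring

theorem representer_theorem
    {F : Type*} [NormedAddCommGroup F] [InnerProductSpace ℝ F] [CompleteSpace F]
    (d m : ℕ) (φ : (Fin d → ℝ) → F) (x : Fin m → (Fin d → ℝ))
    (y : Fin m → ℝ) (hy : ∀ i, y i = 1 ∨ y i = -1) (C : ℝ) (hC : 0 < C)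
    (R : F → ℝ → ℝ)
    (hR : ∀ w b, R w b = (1 / 2) * ‖w‖ ^ 2 +
      C * ∑ i : Fin m,
        (if 0 < 1 - y i * (inner ℝ w (φ (x i)) + b) then (1 : ℝ) else 0))
    (wstar : F) (bstar : ℝ)
    (hmin : ∀ w b, R wstar bstar ≤ R w b) :
    wstar ∈ Submodule.span ℝ (Set.range fun i => φ (x i)) :=
  representer_theorem_general d m φ x y C R hR wstar bstar hmin
end

section
/- Let K ∈ ℝ^{m×m} be a symmetric positive definite matrix, C > 0, M > 0, y ∈ {-1,1}^m. Define Ψ(c,b) = (1/2)cᵀKc + C·‖(1 - diag(y)Kc - b·y)_+‖_0 where ‖v_+‖_0 counts the positive components of v. Then the minimum of Ψ over ℝ^m × [-M,M] is attained, and the set of minimizers is nonempty and compact. -/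
/-!
The quadratic part of `Ψ` is continuous and the hinge-count part is a nonnegative combination of
indicators of open half-spaces, so `Ψ` is lower semicontinuous. Positive definiteness of `K`
gives `ε ‖c‖² ≤ cᵀKc` for some `ε > 0`, so a sublevel set of `Ψ` on `ℝᵐ × [-M, M]` is closed
and bounded, hence compact. A lower semicontinuous function attains its minimum on a compact
sublevel set, and the set of minimizers is a closed subset of it.
-/

open Set Matrix

theorem LowerSemicontinuous.nonempty_isCompact_setOf_isMinOn
    {X β : Type*} [TopologicalSpace X] [LinearOrder β] {f : X → β} (hf : LowerSemicontinuous f)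
    {A : Set X} {x₀ : X} (hx₀ : x₀ ∈ A)
    (hsub : IsCompact (A ∩ f ⁻¹' Iic (f x₀))) :
    {x ∈ A | IsMinOn f A x}.Nonempty ∧ IsCompact {x ∈ A | IsMinOn f A x} := by
  have hne : (A ∩ f ⁻¹' Iic (f x₀)).Nonempty := ⟨x₀, hx₀, le_rfl⟩
  obtain ⟨x, ⟨hxA, -⟩, hmin⟩ := (hf.lowerSemicontinuousOn _).exists_isMinOn hne hsub
  have hx_le : f x ≤ f x₀ := hmin ⟨hx₀, le_rfl⟩
  refine ⟨⟨x, hxA, fun y hy => ?_⟩, ?_⟩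
  · rcases le_total (f y) (f x₀) with hy₀ | hy₀
    · exact hmin ⟨hy, hy₀⟩
    · exact hx_le.trans hy₀
  · have hset : {x ∈ A | IsMinOn f A x} = (A ∩ f ⁻¹' Iic (f x₀)) ∩ ⋂ y ∈ A, f ⁻¹' Iic (f y) := by
      ext z
      simp only [mem_ofPred_eq, mem_inter_iff, mem_iInter, mem_preimage, mem_Iic, isMinOn_iff]
      exact ⟨fun ⟨hz, hzmin⟩ => ⟨⟨hz, hzmin x₀ hx₀⟩, hzmin⟩, fun ⟨⟨hz, _⟩, hzmin⟩ => ⟨hz, hzmin⟩⟩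
    rw [hset]
    exact hsub.inter_right (isClosed_biInter fun y _ => hf.isClosed_preimage (f y))

section Coercive

variable {E : Type*} [NormedAddCommGroup E] [NormedSpace ℝ E] [FiniteDimensional ℝ E]
  {Q : E → ℝ}

theorem exists_pos_mul_norm_sq_le_of_homogeneous (hQ : Continuous Q)
    (hsmul : ∀ (t : ℝ) x, Q (t • x) = t ^ 2 * Q x) (hpos : ∀ x, x ≠ 0 → 0 < Q x) :
    ∃ ε > 0, ∀ x, ε * ‖x‖ ^ 2 ≤ Q x := by
  have hQ0 : Q 0 = 0 := by simpa using hsmul 0 0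
  rcases subsingleton_or_nontrivial E with hE | hE
  · exact ⟨1, one_pos, fun x => by simp [Subsingleton.elim x 0, hQ0]⟩
  obtain ⟨u, hu, hmin⟩ := (isCompact_sphere (0 : E) 1).exists_isMinOn
    (NormedSpace.sphere_nonempty.2 zero_le_one) hQ.continuousOn
  have hu₁ : ‖u‖ = 1 := mem_sphere_zero_iff_norm.1 hu
  refine ⟨Q u, hpos u (norm_ne_zero_iff.1 (by simp [hu₁])), fun x => ?_⟩
  rcases eq_or_ne x 0 with rfl | hx
  · simp [hQ0]
  have hx' : ‖x‖ ≠ 0 := norm_ne_zero_iff.2 hx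
  have hunit : ‖x‖⁻¹ • x ∈ Metric.sphere (0 : E) 1 := by
    simp [norm_smul, hx']
  calc Q u * ‖x‖ ^ 2 ≤ Q (‖x‖⁻¹ • x) * ‖x‖ ^ 2 := by gcongr; exact hmin hunit
    _ = Q x := by rw [hsmul]; field_simp

theorem isBounded_setOf_le_of_homogeneous (hQ : Continuous Q)
    (hsmul : ∀ (t : ℝ) x, Q (t • x) = t ^ 2 * Q x) (hpos : ∀ x, x ≠ 0 → 0 < Q x) (r : ℝ) :
    Bornology.IsBounded {x | Q x ≤ r} := by
  obtain ⟨ε, hε, hQε⟩ := exists_pos_mul_norm_sq_le_of_homogeneous hQ hsmul hpos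
  refine (Metric.isBounded_closedBall (x := (0 : E)) (r := √(r / ε))).subset fun x hx => ?_
  rw [mem_closedBall_zero_iff, ← abs_norm]
  exact Real.abs_le_sqrt ((le_div_iff₀' hε).2 ((hQε x).trans hx))

end Coercive

theorem Matrix.PosDef.isBounded_setOf_dotProduct_mulVec_le {n : Type*} [Fintype n]
    {K : Matrix n n ℝ} (hK : K.PosDef) (r : ℝ) :
    Bornology.IsBounded {c : n → ℝ | c ⬝ᵥ K *ᵥ c ≤ r} := by
  refine isBounded_setOf_le_of_homogeneous (by fun_prop) (fun t c => ?_)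
    (fun c hc => by simpa using hK.dotProduct_mulVec_pos hc) r
  simp only [mulVec_smul, dotProduct_smul, smul_dotProduct, smul_eq_mul]
  ring

theorem lowerSemicontinuous_sum_ite_pos {X ι : Type*} [TopologicalSpace X] [Fintype ι]
    {g : ι → X → ℝ} (hg : ∀ i, Continuous (g i)) :
    LowerSemicontinuous fun x => ∑ i, if 0 < g i x then (1 : ℝ) else 0 := by
  refine lowerSemicontinuous_sum fun i _ => ?_
  have hind : (fun x => if 0 < g i x then (1 : ℝ) else 0) = {x | 0 < g i x}.indicator 1 := by
    ext x
    simp [indicator_apply]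
  rw [hind]
  exact (isOpen_lt continuous_const (hg i)).lowerSemicontinuous_indicator zero_le_one

theorem existence_of_minimizer_general
    (m : ℕ) (K : Matrix (Fin m) (Fin m) ℝ) (hKpd : K.PosDef)
    (C M : ℝ) (hC : 0 < C) (hM : 0 < M)
    (y : Fin m → ℝ)
    (Ψ : (Fin m → ℝ) × ℝ → ℝ)
    (hΨ : ∀ c b, Ψ (c, b) = (1 / 2) * dotProduct c (K.mulVec c) +
      C * ∑ i : Fin m,
        (if 0 < 1 - y i * K.mulVec c i - b * y i then (1 : ℝ) else 0))
    (A : Set ((Fin m → ℝ) × ℝ)) (hA : A = Set.univ ×ˢ Set.Icc (-M) M) :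
    (∃ p ∈ A, ∀ q ∈ A, Ψ p ≤ Ψ q) ∧
      ({p ∈ A | ∀ q ∈ A, Ψ p ≤ Ψ q}).Nonempty ∧
      IsCompact {p ∈ A | ∀ q ∈ A, Ψ p ≤ Ψ q} := by
  have hΨ' : Ψ = fun p => (1 / 2) * (p.1 ⬝ᵥ K *ᵥ p.1) +
      C * ∑ i, if 0 < 1 - y i * (K *ᵥ p.1) i - p.2 * y i then (1 : ℝ) else 0 :=
    funext fun p => hΨ p.1 p.2
  have hlsc : LowerSemicontinuous Ψ := by
    rw [hΨ']
    refine (Continuous.lowerSemicontinuous (by fun_prop)).add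
      ((continuous_const_mul C).comp_lowerSemicontinuous
        (lowerSemicontinuous_sum_ite_pos fun i => by fun_prop) (monotone_mul_left_of_nonneg hC.le))
  have hquad_le : ∀ p, p.1 ⬝ᵥ K *ᵥ p.1 ≤ 2 * Ψ p := fun p => by
    rw [hΨ']
    have : 0 ≤ C * ∑ i, if 0 < 1 - y i * (K *ᵥ p.1) i - p.2 * y i then (1 : ℝ) else 0 := by
      positivity
    linarith
  have h0A : ((0, 0) : (Fin m → ℝ) × ℝ) ∈ A := by
    rw [hA]
    exact ⟨trivial, by linarith, hM.le⟩
  have hsub : IsCompact (A ∩ Ψ ⁻¹' Iic (Ψ (0, 0))) := by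
    refine Metric.isCompact_of_isClosed_isBounded
      ((hA ▸ isClosed_univ.prod isClosed_Icc).inter (hlsc.isClosed_preimage _)) ?_
    refine ((hKpd.isBounded_setOf_dotProduct_mulVec_le (2 * Ψ (0, 0))).prod
      (Metric.isBounded_Icc (-M) M)).subset ?_
    rintro ⟨c, b⟩ ⟨hpA, hle⟩
    rw [hA] at hpA
    exact ⟨(hquad_le (c, b)).trans (by simpa using hle), hpA.2⟩
  obtain ⟨hne, hcpt⟩ := hlsc.nonempty_isCompact_setOf_isMinOn h0A hsub
  simp only [isMinOn_iff] at hne hcpt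
  exact ⟨hne, hne, hcpt⟩

theorem existence_of_minimizer
    (m : ℕ) (K : Matrix (Fin m) (Fin m) ℝ) (hK : K.IsSymm) (hKpd : K.PosDef)
    (C M : ℝ) (hC : 0 < C) (hM : 0 < M)
    (y : Fin m → ℝ) (hy : ∀ i, y i = 1 ∨ y i = -1)
    (Ψ : (Fin m → ℝ) × ℝ → ℝ)
    (hΨ : ∀ c b, Ψ (c, b) = (1 / 2) * dotProduct c (K.mulVec c) +
      C * ∑ i : Fin m,
        (if 0 < 1 - y i * K.mulVec c i - b * y i then (1 : ℝ) else 0))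
    (A : Set ((Fin m → ℝ) × ℝ)) (hA : A = Set.univ ×ˢ Set.Icc (-M) M) :
    (∃ p ∈ A, ∀ q ∈ A, Ψ p ≤ Ψ q) ∧
      ({p ∈ A | ∀ q ∈ A, Ψ p ≤ Ψ q}).Nonempty ∧
      IsCompact {p ∈ A | ∀ q ∈ A, Ψ p ≤ Ψ q} :=
  existence_of_minimizer_general m K hKpd C M hC hM y Ψ hΨ A hA
end

section
/- For γ, C > 0 and η ∈ ℝ, the set of minimizers of v ↦ C·ℓ_{0/1}(v) + (1/(2γ))(v - η)² is: {0} if 0 < η < √(2γC); {0, η} if η = √(2γC); and {η} otherwise (i.e., if η ≤ 0 or η > √(2γC)). -/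
/-!
Split the line at `0`. On `v ≤ 0` the objective is the parabola `(v - η)² / (2γ)`, and on `v > 0`
it is `C` plus that parabola. If `η ≤ 0`, then `η` is the unique zero of the nonnegative objective.
If `η > 0`, each piece has a unique minimiser, `0` with value `η² / (2γ)` and `η` with value `C`;
the global minimisers are those of the pieces with the smaller value, and
`η² / (2γ) ≤ C ↔ η ≤ √(2γC)`.
-/

open Real

section Minimizers

variable {α β : Type*} [LinearOrder β] {f : α → β} {a b v : α}

theorem setOf_forall_le_eq_singleton (h : ∀ w, w ≠ a → f a < f w) :
    {v | ∀ w, f v ≤ f w} = {a} := by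
  ext v
  refine ⟨fun hv => by_contra fun hva => (h v hva).not_ge (hv a), ?_⟩
  rintro rfl w
  rcases eq_or_ne w v with rfl | hw
  · exact le_rfl
  · exact (h w hw).le

theorem mem_setOf_forall_le_iff_of_piecewise_strict_min (s : Set α) (ha : a ∈ s) (hb : b ∉ s)
    (hsa : ∀ w ∈ s, w ≠ a → f a < f w) (hsb : ∀ w ∉ s, w ≠ b → f b < f w) :
    v ∈ {v | ∀ w, f v ≤ f w} ↔ v = a ∧ f a ≤ f b ∨ v = b ∧ f b ≤ f a := by
  have hle_a : ∀ w ∈ s, f a ≤ f w := fun w hw =>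
    (eq_or_ne w a).elim (fun h => h ▸ le_rfl) fun h => (hsa w hw h).le
  have hle_b : ∀ w ∉ s, f b ≤ f w := fun w hw =>
    (eq_or_ne w b).elim (fun h => h ▸ le_rfl) fun h => (hsb w hw h).le
  constructor
  · intro hv
    by_cases hvs : v ∈ s
    · have hva : v = a := by_contra fun h => (hsa v hvs h).not_ge (hv a)
      exact .inl ⟨hva, hva ▸ hv b⟩
    · have hvb : v = b := by_contra fun h => (hsb v hvs h).not_ge (hv b)
      exact .inr ⟨hvb, hvb ▸ hv a⟩
  · rintro (⟨rfl, hab⟩ | ⟨rfl, hba⟩) w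
    · by_cases hw : w ∈ s
      exacts [hle_a w hw, hab.trans (hle_b w hw)]
    · by_cases hw : w ∈ s
      exacts [hba.trans (hle_a w hw), hle_b w hw]

end Minimizers

noncomputable def zeroOneLoss (v : ℝ) : ℝ := if 0 < v then 1 else 0

noncomputable def proxZeroOneObjective (γ C η v : ℝ) : ℝ :=
  C * zeroOneLoss v + 1 / (2 * γ) * (v - η) ^ 2

namespace proxZeroOneObjective

variable {γ C η : ℝ}

theorem of_nonpos {v : ℝ} (hv : v ≤ 0) :
    proxZeroOneObjective γ C η v = 1 / (2 * γ) * (v - η) ^ 2 := by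
  simp [proxZeroOneObjective, zeroOneLoss, not_lt.2 hv]

theorem of_pos {v : ℝ} (hv : 0 < v) :
    proxZeroOneObjective γ C η v = C + 1 / (2 * γ) * (v - η) ^ 2 := by
  simp [proxZeroOneObjective, zeroOneLoss, hv]

theorem pos_of_ne (hγ : 0 < γ) (hC : 0 < C) {w : ℝ} (hw : w ≠ η) :
    0 < proxZeroOneObjective γ C η w := by
  have hsq : 0 < (w - η) ^ 2 := pow_two_pos_of_ne_zero (sub_ne_zero.2 hw)
  rcases le_or_gt w 0 with hw0 | hw0
  · rw [of_nonpos hw0]; positivity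
  · rw [of_pos hw0]; positivity

theorem apply_zero_lt_apply (hγ : 0 < γ) (hη : 0 < η) {w : ℝ} (hw0 : w ≤ 0)
    (hw : w ≠ 0) : proxZeroOneObjective γ C η 0 < proxZeroOneObjective γ C η w := by
  rw [of_nonpos le_rfl, of_nonpos hw0]
  have hw0 : w < 0 := lt_of_le_of_ne hw0 hw
  -- `(w - η)² - η² = w (w - 2η)`, a product of two negative numbers
  have : (0 - η) ^ 2 < (w - η) ^ 2 := by nlinarith
  gcongr

theorem apply_self_lt_apply (hγ : 0 < γ) (hη : 0 < η) {w : ℝ} (hw0 : 0 < w) (hw : w ≠ η) :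
    proxZeroOneObjective γ C η η < proxZeroOneObjective γ C η w := by
  rw [of_pos hη, of_pos hw0, sub_self]
  have : 0 < 1 / (2 * γ) * (w - η) ^ 2 := by
    have := pow_two_pos_of_ne_zero (sub_ne_zero.2 hw); positivity
  linarith

theorem apply_zero_le_apply_self_iff (hγ : 0 < γ) (hη : 0 < η) :
    proxZeroOneObjective γ C η 0 ≤ proxZeroOneObjective γ C η η ↔ η ≤ √(2 * γ * C) := by
  rw [of_nonpos le_rfl, of_pos hη, le_sqrt' hη, one_div, inv_mul_le_iff₀ (by positivity)]
  simp

theorem apply_self_le_apply_zero_iff (hγ : 0 < γ) (hη : 0 < η) :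
    proxZeroOneObjective γ C η η ≤ proxZeroOneObjective γ C η 0 ↔ √(2 * γ * C) ≤ η := by
  rw [of_nonpos le_rfl, of_pos hη, sqrt_le_left hη.le, one_div, le_inv_mul_iff₀ (by positivity)]
  simp

theorem mem_minimizers_iff (hγ : 0 < γ) (hη : 0 < η) {v : ℝ} :
    v ∈ {v | ∀ w, proxZeroOneObjective γ C η v ≤ proxZeroOneObjective γ C η w} ↔
      v = 0 ∧ η ≤ √(2 * γ * C) ∨ v = η ∧ √(2 * γ * C) ≤ η := by
  rw [mem_setOf_forall_le_iff_of_piecewise_strict_min (Set.Iic 0) Set.self_mem_Iic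
    (Set.notMem_Iic.2 hη) (fun w hw => apply_zero_lt_apply hγ hη hw)
    (fun w hw => apply_self_lt_apply hγ hη (Set.notMem_Iic.1 hw)),
    apply_zero_le_apply_self_iff hγ hη, apply_self_le_apply_zero_iff hγ hη]

theorem minimizers_eq_of_nonpos (hγ : 0 < γ) (hC : 0 < C) (hη : η ≤ 0) :
    {v | ∀ w, proxZeroOneObjective γ C η v ≤ proxZeroOneObjective γ C η w} = {η} := by
  refine setOf_forall_le_eq_singleton fun w hw => ?_
  rw [of_nonpos hη, sub_self]
  simpa using pos_of_ne hγ hC hw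

end proxZeroOneObjective

theorem prox_l01_characterization (γ C η : ℝ) (hγ : 0 < γ) (hC : 0 < C)
    (f : ℝ → ℝ)
    (hf : ∀ v, f v = C * (if 0 < v then (1 : ℝ) else 0) + (1 / (2 * γ)) * (v - η) ^ 2) :
    (0 < η ∧ η < Real.sqrt (2 * γ * C) → {v | ∀ w, f v ≤ f w} = {0}) ∧
    (η = Real.sqrt (2 * γ * C) → {v | ∀ w, f v ≤ f w} = {0, η}) ∧
    (η ≤ 0 ∨ Real.sqrt (2 * γ * C) < η → {v | ∀ w, f v ≤ f w} = {η}) := by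
  obtain rfl : f = proxZeroOneObjective γ C η := funext hf
  refine ⟨fun ⟨hη, hlt⟩ => ?_, fun heq => ?_, ?_⟩
  · ext v
    simp [proxZeroOneObjective.mem_minimizers_iff hγ hη, hlt.le, hlt.not_ge]
  · have hη : 0 < η := heq ▸ sqrt_pos.2 (by positivity)
    ext v
    simp [proxZeroOneObjective.mem_minimizers_iff hγ hη, ← heq]
  · rintro (hη | hlt)
    · exact proxZeroOneObjective.minimizers_eq_of_nonpos hγ hC hη
    · have hη : 0 < η := (sqrt_nonneg _).trans_lt hlt
      ext v
      simp [proxZeroOneObjective.mem_minimizers_iff hγ hη, hlt.le, hlt.not_ge]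
end

section
/- The limiting (Mordukhovich) subdifferential of ℓ_{0/1} at any point t ≠ 0 is {0}, and at t = 0 it equals ℝ_+ = [0, ∞). -/
/-- ℓ0/1 hinge loss. -/
noncomputable def l01 (t : ℝ) : ℝ := if 0 < t then 1 else 0

/-- Regular (Fréchet) subdifferential of `f : ℝ → ℝ` at `z`. -/
def regSubdiff (f : ℝ → ℝ) (z : ℝ) : Set ℝ :=
  {v | ∀ ε > 0, ∃ δ > 0, ∀ t, t ≠ z → |t - z| < δ →
    f t - f z - v * (t - z) ≥ -ε * |t - z|}

/-- Limiting (Mordukhovich) subdifferential of `f : ℝ → ℝ` at `z`. -/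
def limSubdiff (f : ℝ → ℝ) (z : ℝ) : Set ℝ :=
  {v | ∃ zs vs : ℕ → ℝ,
    Filter.Tendsto zs Filter.atTop (nhds z) ∧
    Filter.Tendsto (fun k => f (zs k)) Filter.atTop (nhds (f z)) ∧
    (∀ k, vs k ∈ regSubdiff f (zs k)) ∧
    Filter.Tendsto vs Filter.atTop (nhds v)}

/-!
Away from `0` the step function is locally constant, so its regular subdifferential there is
`{0}`. Being nondecreasing, it has only nonnegative regular subgradients anywhere, and at `0`
every `v ≥ 0` is one, since `v * t < 1 = l01 t` for small `t > 0`. The limiting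
subdifferential contains the regular one, and is contained in every closed set that contains
the regular subgradients at all nearby points.
-/

open Filter Topology Set

section RegSubdiff

variable {f : ℝ → ℝ} {z v : ℝ}

theorem mem_regSubdiff_of_eventually_le (h : ∀ᶠ t in 𝓝 z, f z + v * (t - z) ≤ f t) :
    v ∈ regSubdiff f z := by
  intro ε hε
  obtain ⟨δ, hδ, hball⟩ := Metric.eventually_nhds_iff.1 h
  refine ⟨δ, hδ, fun t _ ht => ?_⟩
  have hle := hball (by rwa [Real.dist_eq])
  nlinarith [abs_nonneg (t - z)]

theorem eventually_le_of_mem_regSubdiff (hv : v ∈ regSubdiff f z) {ε : ℝ} (hε : 0 < ε) :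
    ∀ᶠ t in 𝓝[≠] z, f z + v * (t - z) - ε * |t - z| ≤ f t := by
  obtain ⟨δ, hδ, hball⟩ := hv ε hε
  filter_upwards [self_mem_nhdsWithin, nhdsWithin_le_nhds (Metric.ball_mem_nhds z hδ)]
    with t hne ht
  have := hball t hne (by rwa [Metric.mem_ball, Real.dist_eq] at ht)
  linarith

theorem le_of_mem_regSubdiff_of_eventually_le_left (hv : v ∈ regSubdiff f z) {c : ℝ}
    (h : ∀ᶠ t in 𝓝[<] z, f t ≤ f z + c * (t - z)) : c ≤ v := by
  refine le_of_forall_pos_le_add fun ε hε => ?_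
  have hlower := (eventually_le_of_mem_regSubdiff hv hε).filter_mono
    (nhdsWithin_mono z fun t (ht : t < z) => ht.ne)
  obtain ⟨t, hlt, hle, hge⟩ := (eventually_mem_nhdsWithin.and (h.and hlower)).exists
  rw [abs_of_neg (sub_neg.2 hlt)] at hge
  nlinarith [sub_neg.2 (show t < z from hlt)]

theorem le_of_mem_regSubdiff_of_eventually_le_right (hv : v ∈ regSubdiff f z) {c : ℝ}
    (h : ∀ᶠ t in 𝓝[>] z, f t ≤ f z + c * (t - z)) : v ≤ c := by
  refine le_of_forall_pos_le_add fun ε hε => ?_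
  have hlower := (eventually_le_of_mem_regSubdiff hv hε).filter_mono
    (nhdsWithin_mono z fun t (ht : z < t) => ht.ne')
  obtain ⟨t, hgt, hle, hge⟩ := (eventually_mem_nhdsWithin.and (h.and hlower)).exists
  rw [abs_of_pos (sub_pos.2 hgt)] at hge
  nlinarith [sub_pos.2 (show z < t from hgt)]

theorem regSubdiff_eq_singleton_zero_of_eventuallyEq (h : f =ᶠ[𝓝 z] fun _ => f z) :
    regSubdiff f z = {0} := by
  have hle : ∀ᶠ t in 𝓝 z, f t ≤ f z + 0 * (t - z) := h.mono fun t ht => by simp [ht]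
  refine Subset.antisymm (fun v hv => le_antisymm ?_ ?_) ?_
  · exact le_of_mem_regSubdiff_of_eventually_le_right hv (nhdsWithin_le_nhds hle)
  · exact le_of_mem_regSubdiff_of_eventually_le_left hv (nhdsWithin_le_nhds hle)
  · rintro v rfl
    exact mem_regSubdiff_of_eventually_le (h.mono fun t ht => by simp [ht])

theorem Monotone.nonneg_of_mem_regSubdiff (hf : Monotone f) (hv : v ∈ regSubdiff f z) :
    0 ≤ v :=
  le_of_mem_regSubdiff_of_eventually_le_left hv <|
    eventually_nhdsWithin_of_forall fun t (ht : t < z) => by simpa using hf ht.le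

end RegSubdiff

section LimSubdiff

variable {f : ℝ → ℝ} {z : ℝ}

theorem regSubdiff_subset_limSubdiff : regSubdiff f z ⊆ limSubdiff f z := fun v hv =>
  ⟨fun _ => z, fun _ => v, tendsto_const_nhds, tendsto_const_nhds, fun _ => hv,
    tendsto_const_nhds⟩

theorem limSubdiff_subset_of_eventually_regSubdiff_subset {S : Set ℝ} (hS : IsClosed S)
    (h : ∀ᶠ y in 𝓝 z, regSubdiff f y ⊆ S) : limSubdiff f z ⊆ S := by
  rintro v ⟨zs, vs, hzs, -, hreg, hvs⟩
  exact hS.mem_of_tendsto hvs ((hzs.eventually h).mono fun k hk => hk (hreg k))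

end LimSubdiff

theorem l01_of_pos {t : ℝ} (ht : 0 < t) : l01 t = 1 := if_pos ht

theorem l01_of_nonpos {t : ℝ} (ht : t ≤ 0) : l01 t = 0 := if_neg ht.not_gt

theorem monotone_l01 : Monotone l01 := by
  intro a b hab
  rcases le_or_gt a 0 with ha | ha
  · rw [l01_of_nonpos ha]
    unfold l01
    split_ifs <;> norm_num
  · rw [l01_of_pos ha, l01_of_pos (ha.trans_le hab)]

theorem l01_eventuallyEq_of_ne {z : ℝ} (hz : z ≠ 0) : l01 =ᶠ[𝓝 z] fun _ => l01 z := by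
  rcases hz.lt_or_gt with hz | hz
  · filter_upwards [eventually_lt_nhds hz] with t ht
    rw [l01_of_nonpos ht.le, l01_of_nonpos hz.le]
  · filter_upwards [eventually_gt_nhds hz] with t ht
    rw [l01_of_pos ht, l01_of_pos hz]

theorem regSubdiff_l01_of_ne {z : ℝ} (hz : z ≠ 0) : regSubdiff l01 z = {0} :=
  regSubdiff_eq_singleton_zero_of_eventuallyEq (l01_eventuallyEq_of_ne hz)

theorem regSubdiff_l01_zero : regSubdiff l01 0 = Ici 0 := by
  refine Subset.antisymm (fun v => monotone_l01.nonneg_of_mem_regSubdiff) fun v (hv : 0 ≤ v) => ?_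
  have hsmall : ∀ᶠ t in 𝓝 (0 : ℝ), v * t < 1 :=
    (continuous_const_mul v).continuousAt.eventually_lt continuous_const.continuousAt
      (by simp)
  refine mem_regSubdiff_of_eventually_le (hsmall.mono fun t ht => ?_)
  rcases le_or_gt t 0 with h | h
  · simp [l01_of_nonpos h, l01_of_nonpos le_rfl, mul_nonpos_of_nonneg_of_nonpos hv h]
  · simp [l01_of_nonpos le_rfl, l01_of_pos h, ht.le]

theorem limSubdiff_l01 :
    (∀ t : ℝ, t ≠ 0 → limSubdiff l01 t = {0}) ∧
      limSubdiff l01 0 = Set.Ici 0 := by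
  refine ⟨fun t ht => Subset.antisymm ?_ ?_, Subset.antisymm ?_ ?_⟩
  · exact limSubdiff_subset_of_eventually_regSubdiff_subset isClosed_singleton <|
      (eventually_ne_nhds ht).mono fun y hy => (regSubdiff_l01_of_ne hy).subset
  · exact regSubdiff_l01_of_ne ht ▸ regSubdiff_subset_limSubdiff
  · exact limSubdiff_subset_of_eventually_regSubdiff_subset isClosed_Ici <|
      Eventually.of_forall fun _ _ => monotone_l01.nonneg_of_mem_regSubdiff
  · exact regSubdiff_l01_zero ▸ regSubdiff_subset_limSubdiff
end
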